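/- arXiv:2405.09962 — 4 statements merged into one kernel-verified Lean document; each statement's English description precedes it below -/
import Mathlib

section
/- For a binomial random variable: Pr(X_{λ+2,ξ} ≤ ℓ+1) = Pr(X_{λ,ξ} ≤ ℓ) + ((1-ξ)(λ+1)/(ℓ+1) - 1)·C(λ,ℓ)·ξ^{ℓ+1}·(1-ξ)^{λ-ℓ}, where X_{k,ξ} ~ Bin(k,ξ). -/
open Finset

/-- CDF of the binomial distribution: `Pr(Bin(k, ξ) ≤ ℓ)`. -/
def binCdf (k : ℕ) (ξ : ℝ) (ℓ : ℕ) : ℝ :=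
  ∑ i ∈ Finset.range (ℓ + 1), (k.choose i : ℝ) * ξ ^ i * (1 - ξ) ^ (k - i)

lemma binCdf_succ_right (n : ℕ) (ξ : ℝ) (k : ℕ) :
    binCdf n ξ (k + 1) =
      binCdf n ξ k + (n.choose (k + 1) : ℝ) * ξ ^ (k + 1) * (1 - ξ) ^ (n - (k + 1)) := by
  simp [binCdf, Finset.sum_range_succ]

lemma binCdf_succ_left (n k : ℕ) (hk : k ≤ n) (ξ : ℝ) :
    binCdf (n + 1) ξ k =
      binCdf n ξ k - (n.choose k : ℝ) * ξ ^ (k + 1) * (1 - ξ) ^ (n - k) := by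
  induction k with
  | zero =>
      simp only [binCdf, zero_add, Finset.sum_range_one, Nat.choose_zero_right, Nat.cast_one,
        pow_zero, Nat.sub_zero, mul_one, one_mul, pow_one]
      rw [pow_succ]
      ring
  | succ k ih =>
      have hk' : k ≤ n := Nat.le_of_succ_le hk
      rw [binCdf_succ_right, binCdf_succ_right, ih hk']
      have h1 : n + 1 - (k + 1) = n - k := by omega
      have h2 : n - k = n - (k + 1) + 1 := by omega
      push_cast [Nat.choose_succ_succ, h1, h2, pow_succ]
      ring

theorem stmt3 (l lam : ℕ) (hlam : 1 ≤ lam) (hll : l ≤ lam)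
    (ξ : ℝ) (hξ : ξ ∈ Set.Icc (0 : ℝ) 1) :
    binCdf (lam + 2) ξ (l + 1) =
      binCdf lam ξ l +
        ((1 - ξ) * (lam + 1 : ℝ) / (l + 1 : ℝ) - 1) *
          (lam.choose l : ℝ) * ξ ^ (l + 1) * (1 - ξ) ^ (lam - l) := by
  have hA := binCdf_succ_left (lam + 1) (l + 1) (by omega) ξ
  have h1 := binCdf_succ_right (lam + 1) ξ l
  have h2 := binCdf_succ_left lam l hll ξ
  have e1 : lam + 1 - (l + 1) = lam - l := by omega
  rw [e1] at hA h1
  have hcast : ((l : ℝ) + 1) * ((lam + 1).choose (l + 1) : ℝ)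
      = ((lam : ℝ) + 1) * (lam.choose l : ℝ) := by
    have := Nat.add_one_mul_choose_eq lam l
    have : (lam + 1) * lam.choose l = (lam + 1).choose (l + 1) * (l + 1) := this
    exact_mod_cast by linarith [congrArg (Nat.cast (R := ℝ)) this] 
  have hl0 : ((l : ℝ) + 1) ≠ 0 := by positivity
  show binCdf ((lam + 1) + 1) ξ (l + 1) = _
  rw [hA, h1, h2]
  field_simp
  linear_combination (ξ ^ (l + 1) * (1 - ξ) ^ (lam - l) * (1 - ξ)) * hcast
end

section
/- For ξ = 0.27 and all integers λ ≥ 6, the binomial tail satisfies Pr(X_{λ,ξ} ≤ λ - ⌊λ/2⌋) ≥ Pr(X_{λ-2,ξ} ≤ (λ-2) - ⌊(λ-2)/2⌋) when λ ≥ 8; consequently, by induction from the base cases λ = 6 and λ = 7, Pr(X_{λ,ξ} ≤ λ - ⌊λ/2⌋) ≥ 0.95 for all λ ≥ 6. -/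
open Finset

/-- The binomial tail `Pr(Bin(λ, ξ) ≤ λ - ⌊λ/2⌋)`. -/
def tail (lam : ℕ) (ξ : ℝ) : ℝ := binCdf lam ξ (lam - lam / 2)

/-- binomial pmf term -/
def binP (k ℓ : ℕ) (ξ : ℝ) : ℝ := (k.choose ℓ : ℝ) * ξ ^ ℓ * (1 - ξ) ^ (k - ℓ)

lemma binCdf_succ_level (k : ℕ) (ξ : ℝ) (ℓ : ℕ) :
    binCdf k ξ (ℓ + 1) = binCdf k ξ ℓ + binP k (ℓ + 1) ξ := by
  simp [binCdf, binP, Finset.sum_range_succ]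

lemma binP_pascal (k ℓ : ℕ) (h : ℓ + 1 ≤ k) (ξ : ℝ) :
    binP (k + 1) (ℓ + 1) ξ = ξ * binP k ℓ ξ + (1 - ξ) * binP k (ℓ + 1) ξ := by
  have h1 : k + 1 - (ℓ + 1) = (k - (ℓ + 1)) + 1 := by omega
  have h2 : k - ℓ = (k - (ℓ + 1)) + 1 := by omega
  simp only [binP, Nat.choose_succ_succ, h1, h2, pow_succ]
  push_cast
  ring

lemma binCdf_succ (k : ℕ) (ξ : ℝ) : ∀ ℓ, ℓ ≤ k →
    binCdf (k + 1) ξ ℓ = binCdf k ξ ℓ - ξ * binP k ℓ ξ := by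
  intro ℓ
  induction ℓ with
  | zero =>
    intro _
    simp [binCdf, binP, pow_succ]
    ring
  | succ m ih =>
    intro h
    rw [binCdf_succ_level, binCdf_succ_level, ih (by omega), binP_pascal k m h]
    ring

lemma choose_ratio (n ℓ : ℕ) (hineq : 27 * (ℓ + 1) ≤ 73 * (n - ℓ)) :
    27 * n.choose ℓ ≤ 73 * n.choose (ℓ + 1) := by
  have h1 := Nat.choose_succ_right_eq n ℓ
  have hle : 27 * n.choose ℓ * (ℓ + 1) ≤ 73 * n.choose (ℓ + 1) * (ℓ + 1) := by
    calc 27 * n.choose ℓ * (ℓ + 1) = n.choose ℓ * (27 * (ℓ + 1)) := by ring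
    _ ≤ n.choose ℓ * (73 * (n - ℓ)) := Nat.mul_le_mul_left _ hineq
    _ = 73 * (n.choose ℓ * (n - ℓ)) := by ring
    _ = 73 * (n.choose (ℓ + 1) * (ℓ + 1)) := by rw [h1]
    _ = 73 * n.choose (ℓ + 1) * (ℓ + 1) := by ring
  exact Nat.le_of_mul_le_mul_right hle (by omega)

lemma binCdf_two_step (n ℓ : ℕ) (h : ℓ + 1 ≤ n)
    (hineq : 27 * (ℓ + 1) ≤ 73 * (n - ℓ)) :
    binCdf n 0.27 ℓ ≤ binCdf (n + 2) 0.27 (ℓ + 1) := by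
  have e1 : binCdf (n + 2) 0.27 (ℓ + 1)
      = binCdf (n + 1) 0.27 (ℓ + 1) - 0.27 * binP (n + 1) (ℓ + 1) 0.27 :=
    binCdf_succ (n + 1) 0.27 (ℓ + 1) (by omega)
  have e2 : binCdf (n + 1) 0.27 (ℓ + 1)
      = binCdf n 0.27 (ℓ + 1) - 0.27 * binP n (ℓ + 1) 0.27 :=
    binCdf_succ n 0.27 (ℓ + 1) h
  have e3 := binCdf_succ_level n (0.27 : ℝ) ℓ
  have e4 := binP_pascal n ℓ h (0.27 : ℝ)
  have key : (0.27 : ℝ) ^ 2 * binP n ℓ 0.27 ≤ ((1:ℝ) - 0.27) ^ 2 * binP n (ℓ + 1) 0.27 := by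
    have hc : (27 : ℝ) * n.choose ℓ ≤ 73 * n.choose (ℓ + 1) := by
      exact_mod_cast choose_ratio n ℓ hineq
    have h2 : n - ℓ = (n - (ℓ + 1)) + 1 := by omega
    simp only [binP, h2]
    rw [pow_succ (0.27:ℝ) ℓ, pow_succ ((1:ℝ)-0.27) (n-(ℓ+1))]
    have hXpos : (0:ℝ) ≤ (0.27 : ℝ) ^ ℓ * ((1:ℝ) - 0.27) ^ (n - (ℓ + 1)) := by positivity
    have goal_eq₁ : (0.27 : ℝ) ^ 2 * ((n.choose ℓ : ℝ) * 0.27 ^ ℓ * (((1:ℝ) - 0.27) ^ (n - (ℓ + 1)) * (1 - 0.27)))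
        = ((0.27:ℝ)^2 * (1 - 0.27) * n.choose ℓ) * ((0.27 : ℝ) ^ ℓ * ((1:ℝ) - 0.27) ^ (n - (ℓ + 1))) := by ring
    have goal_eq₂ : ((1:ℝ) - 0.27) ^ 2 * ((n.choose (ℓ+1) : ℝ) * (0.27 ^ ℓ * 0.27) * ((1:ℝ) - 0.27) ^ (n - (ℓ + 1)))
        = (((1:ℝ) - 0.27)^2 * 0.27 * n.choose (ℓ+1)) * ((0.27 : ℝ) ^ ℓ * ((1:ℝ) - 0.27) ^ (n - (ℓ + 1))) := by ring
    rw [goal_eq₁, goal_eq₂]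
    apply mul_le_mul_of_nonneg_right _ hXpos
    nlinarith [hc]
  rw [e1, e2, e3, e4]
  nlinarith [key]

lemma tail_mono : ∀ lam : ℕ, 8 ≤ lam → tail (lam - 2) 0.27 ≤ tail lam 0.27 := by
  intro lam hlam
  obtain ⟨n, rfl⟩ : ∃ n, lam = n + 2 := ⟨lam - 2, by omega⟩
  have hlevel : (n + 2) - (n + 2) / 2 = (n - n / 2) + 1 := by omega
  have h1 : (n - n / 2) + 1 ≤ n := by omega
  have h2 : 27 * ((n - n / 2) + 1) ≤ 73 * (n - (n - n / 2)) := by omega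
  simp only [tail, Nat.add_sub_cancel, hlevel]
  exact binCdf_two_step n (n - n / 2) h1 h2

lemma tail6 : (0.95 : ℝ) ≤ tail 6 0.27 := by
  show (0.95 : ℝ) ≤ binCdf 6 0.27 (6 - 6 / 2)
  norm_num [binCdf, Finset.sum_range_succ, Nat.choose]

lemma tail7 : (0.95 : ℝ) ≤ tail 7 0.27 := by
  show (0.95 : ℝ) ≤ binCdf 7 0.27 (7 - 7 / 2)
  norm_num [binCdf, Finset.sum_range_succ, Nat.choose]

theorem stmt5 :
    (∀ lam : ℕ, 8 ≤ lam → tail (lam - 2) 0.27 ≤ tail lam 0.27) ∧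
      (∀ lam : ℕ, 6 ≤ lam → 0.95 ≤ tail lam 0.27) := by
  refine ⟨tail_mono, ?_⟩
  intro lam
  induction lam using Nat.strong_induction_on with
  | _ lam ih =>
    intro h6
    rcases eq_or_lt_of_le h6 with h | h
    · rw [← h]; exact tail6
    rcases eq_or_lt_of_le (show 7 ≤ lam by omega) with h7 | h7
    · rw [← h7]; exact tail7
    have h8 : 8 ≤ lam := by omega
    have hmono := tail_mono lam h8
    have hprev := ih (lam - 2) (by omega) (by omega)
    linarith
end

section
/- (Proposition 1) Suppose the categorical distribution on N dimensions with K_n categories each generates the optimal (first) category in dimension n with probability q_{n,1} = 1 - q_min_n·(K_n - 1), where q_min_n = (1 - (1-ξ)^{1/N})/(K_n - 1) and ξ = 0.27. If λ ≥ 6 independent samples are drawn and λ_non counts the samples containing at least one non-optimal category, then Pr(λ_non ≤ λ - ⌊λ/2⌋) ≥ 0.95. -/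
/-!
Every `q1 n` equals `(1 - ξ) ^ (1 / N)`, so a sample is all-optimal with probability `1 - ξ` and
`λ_non ~ Bin(λ, 0.27)`. For `λ < 18` the lower sum is computed exactly. For `λ ≥ 18`, since
`0.27 ≤ 0.73` every term `0.27 ^ i · 0.73 ^ (λ - i)` of the upper tail `i ≥ m` is at most
`0.27 ^ m · 0.73 ^ (λ - m)`, and the binomial weights sum to `2 ^ λ`; the product is below `1/20`.
-/

open Finset

section BinomialTail

variable {R : Type*} [CommSemiring R] [PartialOrder R] [IsOrderedRing R]

theorem pow_mul_pow_sub_le_of_le {p q : R} (hp : 0 ≤ p) (hpq : p ≤ q) {n m i : ℕ}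
    (hmi : m ≤ i) (hin : i ≤ n) : p ^ i * q ^ (n - i) ≤ p ^ m * q ^ (n - m) := by
  obtain ⟨j, rfl⟩ := Nat.exists_eq_add_of_le hmi
  have hsplit : n - m = j + (n - (m + j)) := by omega
  have hq : 0 ≤ q := hp.trans hpq
  rw [hsplit, pow_add, pow_add, mul_assoc]
  gcongr

theorem sum_Ico_choose_mul_pow_mul_pow_le {p q : R} (hp : 0 ≤ p) (hpq : p ≤ q) (m n : ℕ) :
    ∑ i ∈ Ico m (n + 1), (n.choose i : R) * p ^ i * q ^ (n - i)
      ≤ 2 ^ n * (p ^ m * q ^ (n - m)) := by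
  have hbound_nonneg : 0 ≤ p ^ m * q ^ (n - m) :=
    mul_nonneg (pow_nonneg hp _) (pow_nonneg (hp.trans hpq) _)
  calc ∑ i ∈ Ico m (n + 1), (n.choose i : R) * p ^ i * q ^ (n - i)
      ≤ ∑ i ∈ Ico m (n + 1), (n.choose i : R) * (p ^ m * q ^ (n - m)) := by
        refine sum_le_sum fun i hi => ?_
        rw [mem_Ico] at hi
        rw [mul_assoc]
        exact mul_le_mul_of_nonneg_left (pow_mul_pow_sub_le_of_le hp hpq hi.1 (by omega))
          (Nat.cast_nonneg _)
    _ ≤ ∑ i ∈ range (n + 1), (n.choose i : R) * (p ^ m * q ^ (n - m)) :=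
        sum_le_sum_of_subset_of_nonneg (by grind) fun _ _ _ =>
          mul_nonneg (Nat.cast_nonneg _) hbound_nonneg
    _ = 2 ^ n * (p ^ m * q ^ (n - m)) := by
        rw [← sum_mul, ← Nat.cast_sum, Nat.sum_range_choose, Nat.cast_pow, Nat.cast_ofNat]

end BinomialTail

theorem sum_range_choose_mul_pow_mul_pow_eq_one_sub {p : ℝ} {m n : ℕ} (hmn : m ≤ n + 1) :
    ∑ i ∈ range m, (n.choose i : ℝ) * p ^ i * (1 - p) ^ (n - i)
      = 1 - ∑ i ∈ Ico m (n + 1), (n.choose i : ℝ) * p ^ i * (1 - p) ^ (n - i) := by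
  have htotal : ∑ i ∈ range (n + 1), (n.choose i : ℝ) * p ^ i * (1 - p) ^ (n - i) = 1 := by
    have h := (add_pow p (1 - p) n).symm
    rw [add_sub_cancel, one_pow] at h
    exact (sum_congr rfl fun i _ => by ring).trans h
  rw [← sum_range_add_sum_Ico _ hmn] at htotal
  linarith

theorem prod_eq_of_forall_eq_rpow_one_div {N : ℕ} (hN : N ≠ 0) {c : ℝ} (hc : 0 ≤ c)
    {q : Fin N → ℝ} (hq : ∀ n, q n = c ^ ((1 : ℝ) / N)) : ∏ n, q n = c := by
  simp only [hq, Fin.prod_const, one_div, Real.rpow_inv_natCast_pow hc hN]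

theorem two_pow_mul_pow_mul_pow_le_of_eighteen_le {n : ℕ} (hn : 18 ≤ n) :
    (2 : ℝ) ^ n * ((27 / 100) ^ (n - n / 2 + 1) * (73 / 100) ^ (n - (n - n / 2 + 1))) ≤ 1 / 20 := by
  -- with `n = 2 (j + 1) + r`, the bound is `(4 · 0.27 · 0.73) ^ j` times a constant
  obtain ⟨j, r, hr, rfl⟩ : ∃ j r, r ≤ 1 ∧ n = 2 * (j + 1) + r :=
    ⟨n / 2 - 1, n % 2, by omega, by omega⟩
  have hj : 8 ≤ j := by omega
  have hm : 2 * (j + 1) + r - (2 * (j + 1) + r) / 2 + 1 = j + r + 2 := by omega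
  have hk : 2 * (j + 1) + r - (j + r + 2) = j := by omega
  rw [hm, hk]
  have hgeom : (1971 / 2500 : ℝ) ^ j ≤ (1971 / 2500) ^ 8 :=
    pow_le_pow_of_le_one (by norm_num) (by norm_num) hj
  have hr' : (27 / 50 : ℝ) ^ r ≤ 1 := pow_le_one₀ (by norm_num) (by norm_num)
  calc (2 : ℝ) ^ (2 * (j + 1) + r) * ((27 / 100) ^ (j + r + 2) * (73 / 100) ^ j)
      = (1971 / 2500) ^ j * (729 / 2500) * (27 / 50) ^ r := by
        rw [show (1971 / 2500 : ℝ) = 4 * (27 / 100) * (73 / 100) by norm_num,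
          show (27 / 50 : ℝ) = 2 * (27 / 100) by norm_num]
        simp only [mul_pow, pow_add, pow_mul]
        ring
    _ ≤ (1971 / 2500) ^ 8 * (729 / 2500) * 1 := by gcongr
    _ ≤ 1 / 20 := by norm_num

theorem binomial_lower_sum_ge_of_six_le {n : ℕ} (hn : 6 ≤ n) :
    (0.95 : ℝ) ≤ ∑ i ∈ range (n - n / 2 + 1),
      (n.choose i : ℝ) * (27 / 100) ^ i * (1 - 27 / 100) ^ (n - i) := by
  rcases lt_or_ge n 18 with hsmall | hlarge
  · interval_cases n <;> norm_num [sum_range_succ, Nat.choose]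
  · rw [sum_range_choose_mul_pow_mul_pow_eq_one_sub (by omega)]
    have htail := sum_Ico_choose_mul_pow_mul_pow_le (R := ℝ) (p := 27 / 100) (q := 1 - 27 / 100)
      (by norm_num) (by norm_num) (n - n / 2 + 1) n
    norm_num at htail ⊢
    linarith [two_pow_mul_pow_mul_pow_le_of_eighteen_le hlarge]

/-- Proposition 1 of the paper. The categorical distribution generates the optimal
category in dimension `n` with probability `q1 n`; a sample avoids all non-optimal
categories with probability `∏ n, q1 n`, and `λ_non ~ Bin(λ, 1 - ∏ n, q1 n)`. -/
theorem stmt8 (N : ℕ) (hN : 1 ≤ N) (K : Fin N → ℕ) (hK : ∀ n, 2 ≤ K n)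
    (ξ : ℝ) (hξ : ξ = 0.27)
    (qmin q1 : Fin N → ℝ)
    (hqmin : ∀ n, qmin n = (1 - (1 - ξ) ^ ((1 : ℝ) / N)) / (K n - 1))
    (hq1 : ∀ n, q1 n = 1 - qmin n * (K n - 1))
    (lam : ℕ) (hlam : 6 ≤ lam)
    (p : ℝ) (hp : p = 1 - ∏ n, q1 n) :
    0.95 ≤ ∑ i ∈ Finset.range (lam - lam / 2 + 1),
      (lam.choose i : ℝ) * p ^ i * (1 - p) ^ (lam - i) := by
  have hq1_eq : ∀ n, q1 n = (1 - ξ) ^ ((1 : ℝ) / N) := fun n => by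
    have hK1 : (K n : ℝ) - 1 ≠ 0 := by
      have : (2 : ℝ) ≤ K n := by exact_mod_cast hK n
      linarith
    rw [hq1, hqmin, div_mul_cancel₀ _ hK1, sub_sub_cancel]
  have hp_eq : p = 27 / 100 := by
    rw [hp, prod_eq_of_forall_eq_rpow_one_div (by omega) (by norm_num [hξ]) hq1_eq, hξ]
    norm_num
  subst hp_eq
  exact binomial_lower_sum_ge_of_six_le hlam
end

section
/- For ξ ∈ (0,1) fixed and ℓ = λ - ⌊λ/2⌋, the sequence of tail probabilities Pr(Bin(λ, ξ) ≤ λ - ⌊λ/2⌋) for even λ (respectively odd λ) is nondecreasing in λ, provided (1-ξ)(λ+1) ≥ (λ - ⌊λ/2⌋) + 1 for all λ in the considered range. -/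
open Finset

/-! Moving from `Bin(n, ξ)` to `Bin(n + 2, ξ)` changes `Pr(X ≤ ℓ)` by
`ξ^(ℓ+1) (1-ξ)^(n-ℓ) ((1-ξ) C(n+1, ℓ+1) - C(n, ℓ))`, and `C(n+1, ℓ+1) = C(n, ℓ) (n+1)/(ℓ+1)`,
so the change is nonnegative exactly when `(1-ξ)(n+1) ≥ ℓ+1`. With `ℓ = λ - ⌊λ/2⌋` the
threshold for `λ + 2` is `ℓ + 1`, which gives the claim. -/

namespace binCdf

theorem succ_right (n k : ℕ) (ξ : ℝ) :
    binCdf n ξ (k + 1) =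
      binCdf n ξ k + (n.choose (k + 1) : ℝ) * ξ ^ (k + 1) * (1 - ξ) ^ (n - (k + 1)) :=
  Finset.sum_range_succ _ _

theorem succ_left (ξ : ℝ) {n k : ℕ} (hk : k ≤ n) :
    binCdf (n + 1) ξ k = binCdf n ξ k - (n.choose k : ℝ) * ξ ^ (k + 1) * (1 - ξ) ^ (n - k) := by
  induction k with
  | zero =>
    simp only [binCdf, zero_add, range_one, sum_singleton, Nat.choose_zero_right, Nat.cast_one,
      pow_zero, mul_one, tsub_zero, pow_succ, one_mul]
    ring
  | succ k ih =>
    have hpow : (1 - ξ) ^ (n - k) = (1 - ξ) ^ (n - (k + 1)) * (1 - ξ) := by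
      rw [← pow_succ]; congr 1; omega
    rw [succ_right, succ_right, ih (by omega), Nat.choose_succ_succ',
      show n + 1 - (k + 1) = n - k by omega, hpow]
    push_cast
    ring

theorem add_two_succ_sub (ξ : ℝ) {n ℓ : ℕ} (hℓ : ℓ ≤ n) :
    binCdf (n + 2) ξ (ℓ + 1) - binCdf n ξ ℓ =
      ξ ^ (ℓ + 1) * (1 - ξ) ^ (n - ℓ) *
        ((1 - ξ) * ((n + 1).choose (ℓ + 1) : ℝ) - (n.choose ℓ : ℝ)) := by
  rw [succ_left ξ (by omega : ℓ + 1 ≤ n + 1), succ_right, succ_left ξ hℓ,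
    show n + 1 - (ℓ + 1) = n - ℓ by omega]
  ring

theorem le_add_two_succ {ξ : ℝ} (hξ : 0 ≤ ξ) {n ℓ : ℕ} (hℓ : ℓ ≤ n)
    (hthr : (ℓ : ℝ) + 1 ≤ (1 - ξ) * ((n : ℝ) + 1)) :
    binCdf n ξ ℓ ≤ binCdf (n + 2) ξ (ℓ + 1) := by
  have hξ1 : 0 ≤ 1 - ξ := by
    by_contra! h
    nlinarith [(n.cast_nonneg : (0 : ℝ) ≤ n), (ℓ.cast_nonneg : (0 : ℝ) ≤ ℓ)]
  have hchoose : ((n + 1).choose (ℓ + 1) : ℝ) * ((ℓ : ℝ) + 1) = ((n : ℝ) + 1) * n.choose ℓ := by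
    exact_mod_cast (Nat.add_one_mul_choose_eq n ℓ).symm
  have hcoeff : (n.choose ℓ : ℝ) ≤ (1 - ξ) * ((n + 1).choose (ℓ + 1) : ℝ) := by
    refine le_of_mul_le_mul_right ?_ (by positivity : (0 : ℝ) < ℓ + 1)
    calc (n.choose ℓ : ℝ) * (ℓ + 1) ≤ n.choose ℓ * ((1 - ξ) * (n + 1)) := by gcongr
      _ = (1 - ξ) * ((n + 1).choose (ℓ + 1) : ℝ) * (ℓ + 1) := by
        rw [mul_assoc _ _ ((ℓ : ℝ) + 1), hchoose]; ring
  rw [← sub_nonneg, add_two_succ_sub ξ hℓ]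
  have := sub_nonneg.2 hcoeff
  positivity

end binCdf

/-- The tail probabilities `Pr(Bin(λ, ξ) ≤ λ - ⌊λ/2⌋)` are nondecreasing along each
parity class of `λ`, provided `(1-ξ)(λ+1) ≥ (λ - ⌊λ/2⌋) + 1`. -/
theorem stmt17 (ξ : ℝ) (hξ : ξ ∈ Set.Ioo (0 : ℝ) 1) (lam : ℕ)
    (hcond : ((lam : ℝ) - (lam / 2 : ℕ)) + 1 ≤ (1 - ξ) * ((lam : ℝ) + 1)) :
    binCdf lam ξ (lam - lam / 2) ≤ binCdf (lam + 2) ξ ((lam + 2) - (lam + 2) / 2) := by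
  rw [show (lam + 2) - (lam + 2) / 2 = lam - lam / 2 + 1 by omega]
  refine binCdf.le_add_two_succ hξ.1.le (Nat.sub_le _ _) ?_
  rwa [Nat.cast_sub (Nat.div_le_self lam 2)]
end
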